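/- arXiv:math/0309243 — 4 statements merged into one kernel-verified Lean document; each statement's English description precedes it below -/
import Mathlib

section
/- Let f ∈ O_{ℂ²,0} be a reduced analytic germ with f(0)=0 and let (S,0) ⊂ (ℂ³,0) be its stabilization, defined by f(x,y) − z² = 0. For analytic germs h₁, h₂ ∈ O_{ℂ²,0}, consider the germ H(x,y,z) = h₁(x,y) + z·h₂(x,y) on ℂ³. Then v(H) = min( v(h₁), v(z·h₂) ), where v denotes the minimal order along arcs on (S,0), h₁ is regarded as the germ (x,y,z) ↦ h₁(x,y), and z·h₂ as the germ (x,y,z) ↦ z·h₂(x,y). -/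
open Filter
open scoped Classical

/-- An arc on the hypersurface `{f = 0} ⊆ ℂ^N`: a germ of an analytic map
`φ : (ℂ,0) → (ℂ^N,0)` with `f ∘ φ ≡ 0` near `0`. -/
structure Arc (N : ℕ) (f : (Fin N → ℂ) → ℂ) where
  toFun : ℂ → Fin N → ℂ
  analyticAt : AnalyticAt ℂ toFun 0
  map_zero : toFun 0 = 0
  vanish : ∀ᶠ τ in nhds 0, f (toFun τ) = 0

/-- The order of vanishing at `0` of a germ `ℂ → ℂ`: the exponent of the first
nonvanishing Taylor term, `⊤` for the zero germ (junk value `0` if not analytic). -/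
noncomputable def ord (h : ℂ → ℂ) : ℕ∞ :=
  if hh : AnalyticAt ℂ h 0 then analyticOrderAt h 0 else 0

/-- `v(g)`: the minimal order of vanishing of `g` along arcs on `{f = 0} ⊆ ℂ^N`. -/
noncomputable def vArc (N : ℕ) (f g : (Fin N → ℂ) → ℂ) : ℕ∞ :=
  ⨅ ψ : Arc N f, ord (g ∘ ψ.toFun)

/-- The `i`-th piece `F_i` of the arc filtration: analytic germs `g` with `v(g) ≥ i`. -/
def arcFiltration (N : ℕ) (f : (Fin N → ℂ) → ℂ) (i : ℕ) :
    Set ((Fin N → ℂ) → ℂ) :=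
  {g | AnalyticAt ℂ g 0 ∧ (i : ℕ∞) ≤ vArc N f g}

/-- `dimQuotEq F i d` says that `dim_ℂ (F i / F (i+1)) = d`: there are `d` elements of
`F i` such that every element of `F i` has a unique expression as a linear combination
of them modulo `F (i+1)`. -/
def dimQuotEq {M : Type*} [AddCommGroup M] [Module ℂ M]
    (F : ℕ → Set M) (i d : ℕ) : Prop :=
  ∃ b : Fin d → M, (∀ k, b k ∈ F i) ∧
    ∀ g ∈ F i, ∃! c : Fin d → ℂ, g - ∑ k, c k • b k ∈ F (i + 1)

/-- The stabilization `{f(x,y) - z² = 0} ⊆ ℂ³` of the plane curve `{f = 0}`. -/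
def stab (f : (Fin 2 → ℂ) → ℂ) : (Fin 3 → ℂ) → ℂ :=
  fun w => f ![w 0, w 1] - w 2 ^ 2

/-- A reduced (squarefree) analytic germ at `0`: no square of a nonunit divides it. -/
def SquarefreeGerm {N : ℕ} (f : (Fin N → ℂ) → ℂ) : Prop :=
  ∀ u : (Fin N → ℂ) → ℂ, AnalyticAt ℂ u 0 → u 0 = 0 →
    ¬ ∃ w : (Fin N → ℂ) → ℂ, AnalyticAt ℂ w 0 ∧
      ∀ᶠ x in nhds 0, f x = u x * u x * w x

/-! The map `σ : z ↦ -z` is an involution of the stabilization over `ℂ²` that fixes `h₁` and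
negates `z·h₂`, so `σ ∘ ψ` is an arc on `S` whenever `ψ` is, and `2·h₁ = H + H ∘ σ`,
`2·z·h₂ = H - H ∘ σ`. As the order of a sum or difference is at least the minimum of the orders,
`v(h₁)` and `v(z·h₂)` are both at least `v(H)`; the reverse inequality is the same fact applied
to `H = h₁ + z·h₂`. -/

theorem analyticOrderAt_le_analyticOrderAt_const_smul {𝕜 E : Type*} [NontriviallyNormedField 𝕜]
    [NormedAddCommGroup E] [NormedSpace 𝕜 E] {f : 𝕜 → E} {z₀ : 𝕜} (c : 𝕜) :
    analyticOrderAt f z₀ ≤ analyticOrderAt (c • f) z₀ := by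
  by_cases hf : AnalyticAt 𝕜 f z₀
  · refine ENat.forall_natCast_le_iff_le.mp fun n ↦ ?_
    simp only [natCast_le_analyticOrderAt, hf, hf.const_smul]
    rintro ⟨g, hg, hfg⟩
    refine ⟨c • g, hg.const_smul, ?_⟩
    filter_upwards [hfg] with z hz
    simp only [Pi.smul_apply, hz, smul_comm c]
  · simp [analyticOrderAt_of_not_analyticAt hf]

theorem ord_eq_analyticOrderAt (h : ℂ → ℂ) : ord h = analyticOrderAt h 0 := by
  unfold ord
  split_ifs with hh
  · rfl
  · exact (analyticOrderAt_of_not_analyticAt hh).symm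

namespace Arc

variable {N : ℕ} {f : (Fin N → ℂ) → ℂ}

noncomputable def map (ψ : Arc N f) (σ : (Fin N → ℂ) →L[ℂ] (Fin N → ℂ))
    (hσ : ∀ w, f (σ w) = f w) : Arc N f where
  toFun := σ ∘ ψ.toFun
  analyticAt := (σ.analyticAt _).comp ψ.analyticAt
  map_zero := by simp [ψ.map_zero]
  vanish := by simpa [hσ] using ψ.vanish

end Arc

section vArc

variable {N : ℕ} {f g g₁ g₂ : (Fin N → ℂ) → ℂ}

theorem vArc_le_analyticOrderAt (ψ : Arc N f) : vArc N f g ≤ analyticOrderAt (g ∘ ψ.toFun) 0 :=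
  (iInf_le _ ψ).trans_eq (ord_eq_analyticOrderAt _)

theorem le_vArc_add : min (vArc N f g₁) (vArc N f g₂) ≤ vArc N f (g₁ + g₂) :=
  le_iInf fun ψ ↦ by
    rw [ord_eq_analyticOrderAt, Pi.add_comp]
    exact (min_le_min (vArc_le_analyticOrderAt ψ) (vArc_le_analyticOrderAt ψ)).trans
      le_analyticOrderAt_add

theorem le_vArc_sub : min (vArc N f g₁) (vArc N f g₂) ≤ vArc N f (g₁ - g₂) :=
  le_iInf fun ψ ↦ by
    rw [ord_eq_analyticOrderAt, Pi.sub_comp]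
    exact (min_le_min (vArc_le_analyticOrderAt ψ) (vArc_le_analyticOrderAt ψ)).trans
      le_analyticOrderAt_sub

theorem vArc_le_vArc_const_smul (c : ℂ) : vArc N f g ≤ vArc N f (c • g) :=
  le_iInf fun ψ ↦ by
    rw [ord_eq_analyticOrderAt, Pi.smul_comp]
    exact (vArc_le_analyticOrderAt ψ).trans (analyticOrderAt_le_analyticOrderAt_const_smul c)

theorem vArc_le_vArc_comp (σ : (Fin N → ℂ) →L[ℂ] (Fin N → ℂ)) (hσ : ∀ w, f (σ w) = f w) :
    vArc N f g ≤ vArc N f (g ∘ σ) :=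
  le_iInf fun ψ ↦ iInf_le _ (ψ.map σ hσ)

theorem vArc_add_eq_min_of_invariant_of_antiinvariant (σ : (Fin N → ℂ) →L[ℂ] (Fin N → ℂ))
    (hσ : ∀ w, f (σ w) = f w) (hg₁ : ∀ w, g₁ (σ w) = g₁ w) (hg₂ : ∀ w, g₂ (σ w) = -g₂ w) :
    vArc N f (g₁ + g₂) = min (vArc N f g₁) (vArc N f g₂) := by
  set H := g₁ + g₂
  have hH : vArc N f H ≤ min (vArc N f H) (vArc N f (H ∘ σ)) :=
    le_min le_rfl (vArc_le_vArc_comp σ hσ)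
  have hg₁_eq : g₁ = (2⁻¹ : ℂ) • (H + H ∘ σ) := by
    ext w
    simp only [H, Pi.smul_apply, Pi.add_apply, Function.comp_apply, hg₁, hg₂, smul_eq_mul]
    ring
  have hg₂_eq : g₂ = (2⁻¹ : ℂ) • (H - H ∘ σ) := by
    ext w
    simp only [H, Pi.smul_apply, Pi.sub_apply, Pi.add_apply, Function.comp_apply, hg₁, hg₂,
      smul_eq_mul]
    ring
  refine le_antisymm (le_min ?_ ?_) le_vArc_add
  · rw [hg₁_eq]
    exact hH.trans (le_vArc_add.trans (vArc_le_vArc_const_smul _))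
  · rw [hg₂_eq]
    exact hH.trans (le_vArc_sub.trans (vArc_le_vArc_const_smul _))

end vArc

noncomputable def reflectZ : (Fin 3 → ℂ) →L[ℂ] (Fin 3 → ℂ) :=
  ContinuousLinearMap.pi fun i ↦ (if i = 2 then -1 else 1 : ℂ) • ContinuousLinearMap.proj i

@[simp] theorem reflectZ_apply_zero (w : Fin 3 → ℂ) : reflectZ w 0 = w 0 := by simp [reflectZ]

@[simp] theorem reflectZ_apply_one (w : Fin 3 → ℂ) : reflectZ w 1 = w 1 := by simp [reflectZ]

@[simp] theorem reflectZ_apply_two (w : Fin 3 → ℂ) : reflectZ w 2 = -w 2 := by simp [reflectZ]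

theorem stab_reflectZ (f : (Fin 2 → ℂ) → ℂ) (w : Fin 3 → ℂ) : stab f (reflectZ w) = stab f w := by
  simp [stab]

theorem v_stabilization_eq_min_general
    (f : (Fin 2 → ℂ) → ℂ)
    (h₁ h₂ : (Fin 2 → ℂ) → ℂ) :
    vArc 3 (stab f) (fun w => h₁ ![w 0, w 1] + w 2 * h₂ ![w 0, w 1])
      = min (vArc 3 (stab f) (fun w => h₁ ![w 0, w 1]))
            (vArc 3 (stab f) (fun w => w 2 * h₂ ![w 0, w 1])) :=
  vArc_add_eq_min_of_invariant_of_antiinvariant (g₁ := fun w => h₁ ![w 0, w 1])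
    (g₂ := fun w => w 2 * h₂ ![w 0, w 1]) reflectZ (stab_reflectZ f) (by simp) (by simp)

/-- Let `(S,0) ⊆ (ℂ³,0)` be the stabilization `{f(x,y) - z² = 0}`
of a reduced plane curve germ `{f = 0}`. For analytic germs `h₁, h₂` on `(ℂ²,0)` and
`H = h₁ + z·h₂` one has `v(H) = min(v(h₁), v(z·h₂))`, where `v` is the minimal order
along arcs on `(S,0)`. -/
theorem v_stabilization_eq_min
    (f : (Fin 2 → ℂ) → ℂ) (hf : AnalyticAt ℂ f 0) (hf0 : f 0 = 0)
    (hred : SquarefreeGerm f)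
    (h₁ h₂ : (Fin 2 → ℂ) → ℂ)
    (hh₁ : AnalyticAt ℂ h₁ 0) (hh₂ : AnalyticAt ℂ h₂ 0) :
    vArc 3 (stab f) (fun w => h₁ ![w 0, w 1] + w 2 * h₂ ![w 0, w 1])
      = min (vArc 3 (stab f) (fun w => h₁ ![w 0, w 1]))
            (vArc 3 (stab f) (fun w => w 2 * h₂ ![w 0, w 1])) :=
  v_stabilization_eq_min_general f h₁ h₂
end

section
/- Define σ(m) = 1 if m is even and σ(m) = 2 if m is odd. Let m₁, m₂, v₁, v₂, v₀ be nonnegative integers (v's possibly infinite) with v₀ ≥ v₁ + v₂. Then σ(m₁+m₂)·(2v₀ + m₁ + m₂) ≥ min( σ(m₁)·(2v₁ + m₁), σ(m₂)·(2v₂ + m₂) ). -/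
/-- `σ(m) = 1` if `m` is even and `σ(m) = 2` if `m` is odd. -/
def sigmaPar (m : ℕ) : ℕ := if Even m then 1 else 2

/-- For nonnegative integers `m₁, m₂` and `v₀, v₁, v₂ ∈ ℤ_{≥0} ∪ {∞}`
with `v₀ ≥ v₁ + v₂` one has
`σ(m₁+m₂)·(2v₀ + m₁ + m₂) ≥ min(σ(m₁)·(2v₁ + m₁), σ(m₂)·(2v₂ + m₂))`. -/
theorem sigma_mul_shifted_ge_min (m₁ m₂ : ℕ) (v₀ v₁ v₂ : ℕ∞)
    (h : v₁ + v₂ ≤ v₀) :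
    min ((sigmaPar m₁ : ℕ∞) * (2 * v₁ + (m₁ : ℕ∞)))
        ((sigmaPar m₂ : ℕ∞) * (2 * v₂ + (m₂ : ℕ∞)))
      ≤ (sigmaPar (m₁ + m₂) : ℕ∞) * (2 * v₀ + (m₁ : ℕ∞) + (m₂ : ℕ∞)) := by
  have hv1 : v₁ ≤ v₀ := le_trans le_self_add h
  have hv2 : v₂ ≤ v₀ := le_trans le_add_self h
  have hdouble : ∀ a : ℕ∞, a ≤ 2 * a := fun a => by
    rw [two_mul]; exact le_self_add
  unfold sigmaPar
  by_cases h1 : Even m₁ <;> by_cases h2 : Even m₂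
  · have hs : Even (m₁ + m₂) := h1.add h2
    simp only [h1, h2, hs, if_pos, Nat.cast_one, one_mul]
    refine min_le_of_left_le ?_
    calc 2 * v₁ + (m₁ : ℕ∞) ≤ 2 * v₀ + (m₁ : ℕ∞) := by gcongr
      _ ≤ 2 * v₀ + (m₁ : ℕ∞) + (m₂ : ℕ∞) := le_self_add
  · have hs : ¬ Even (m₁ + m₂) := by simp [Nat.even_add, h1, h2]
    simp only [h1, h2, hs, if_pos, if_neg, Nat.cast_one, Nat.cast_ofNat, one_mul]
    refine min_le_of_left_le ?_
    calc 2 * v₁ + (m₁ : ℕ∞) ≤ 2 * v₀ + (m₁ : ℕ∞) := by gcongr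
      _ ≤ 2 * v₀ + (m₁ : ℕ∞) + (m₂ : ℕ∞) := le_self_add
      _ ≤ 2 * (2 * v₀ + (m₁ : ℕ∞) + (m₂ : ℕ∞)) := hdouble _
  · have hs : ¬ Even (m₁ + m₂) := by simp [Nat.even_add, h1, h2]
    simp only [h1, h2, hs, if_pos, if_neg, Nat.cast_one, Nat.cast_ofNat, one_mul]
    refine min_le_of_right_le ?_
    calc 2 * v₂ + (m₂ : ℕ∞) ≤ 2 * v₀ + (m₂ : ℕ∞) := by gcongr
      _ ≤ 2 * v₀ + (m₁ : ℕ∞) + (m₂ : ℕ∞) := by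
        rw [add_right_comm]; exact le_self_add
      _ ≤ 2 * (2 * v₀ + (m₁ : ℕ∞) + (m₂ : ℕ∞)) := hdouble _
  · have hs : Even (m₁ + m₂) := by
      rw [Nat.even_add]; simp [h1, h2]
    simp only [h1, h2, hs, if_pos, if_neg, Nat.cast_one, Nat.cast_ofNat, one_mul]
    set a := 2 * v₁ + (m₁ : ℕ∞)
    set b := 2 * v₂ + (m₂ : ℕ∞)
    have hmin : min (2 * a) (2 * b) = 2 * min a b := by
      rcases le_total a b with hab | hab
      · rw [min_eq_left hab, min_eq_left (by gcongr)]
      · rw [min_eq_right hab, min_eq_right (by gcongr)]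
    have key : min (2 * a) (2 * b) ≤ a + b := by
      rw [hmin, two_mul]
      exact add_le_add (min_le_left _ _) (min_le_right _ _)
    refine le_trans key ?_
    calc a + b = 2 * (v₁ + v₂) + (m₁ : ℕ∞) + (m₂ : ℕ∞) := by simp only [a, b]; ring
      _ ≤ 2 * v₀ + (m₁ : ℕ∞) + (m₂ : ℕ∞) := by gcongr
end

section
/- For the parabolic surface singularity T_{2,3,6} (= J₁₀), i.e., the surface germ (V,0) ⊂ (ℂ³,0) defined by x⁶ + y³ + z² = 0, the Poincaré series of the arc filtration is P_{V,0}(t) = (1 − t⁶) / ( (1 − t)(1 − t²)(1 − t³) ), as an identity of formal power series. -/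
open Filter
open scoped Classical

/-!
Give `x, y, z` the weights `1, 2, 3`, so that `f = x⁶ + y³ + z²` is weighted homogeneous of
degree `6`. Along an arc the orders of `x, y, z` are at least `1, 2, 3`: the smallest two of
`6 ord x`, `3 ord y`, `2 ord z` must agree. Hence a polynomial whose monomials all have weight
`≥ i` lies in `F_i`. Conversely, a point `P` of `V` gives the arc `τ ↦ (τ P₀, τ² P₁, τ³ P₂)`,
along which a weighted homogeneous polynomial of degree `d` is `τ ^ d` times its value at `P`.
Comparing with a Taylor polynomial of `g ∈ F_i`, the weighted components of degree `< i` vanish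
on `V`, and modulo `z² = -x⁶ - y³` the component of degree `i` is a combination of the monomials
`x^a y^b` (`a + 2b = i`) and `x^a y^b z` (`a + 2b + 3 = i`), which are linearly independent on
`V`. So `dim F_i/F_{i+1}` is `1` for `i = 0` and `i` otherwise, and
`∑ dim · tⁱ = (1 + t³)/((1 - t)(1 - t²)) = (1 - t⁶)/((1 - t)(1 - t²)(1 - t³))`.
-/

open Filter Asymptotics Topology

section AnalyticOrder

variable {𝕜 E : Type*} [NontriviallyNormedField 𝕜] [NormedAddCommGroup E] [NormedSpace 𝕜 E]
  {f : 𝕜 → E} {z₀ : 𝕜}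

theorem AnalyticAt.natCast_le_analyticOrderAt_iff_isBigO (hf : AnalyticAt 𝕜 f z₀) {n : ℕ} :
    (n : ℕ∞) ≤ analyticOrderAt f z₀ ↔ f =O[𝓝 z₀] fun z => (z - z₀) ^ n := by
  have hsub : Tendsto (fun z => z - z₀) (𝓝 z₀) (𝓝 0) := tendsto_sub_nhds_zero_iff.2 tendsto_id
  constructor
  · rw [natCast_le_analyticOrderAt hf]
    rintro ⟨g, hg, hfg⟩
    have := (isBigO_refl (fun z => (z - z₀) ^ n) (𝓝 z₀)).smul
      (hg.continuousAt.tendsto.isBigO_one 𝕜)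
    refine this.congr' ?_ (by simp)
    filter_upwards [hfg] with z hz using hz.symm
  · intro h
    cases hm : analyticOrderAt f z₀ with
    | top => exact le_top
    | coe m =>
      obtain ⟨u, hu, hu0, hfu⟩ := hf.analyticOrderAt_eq_natCast.mp hm
      by_contra hmn
      have hmn : m < n := by exact_mod_cast not_le.mp hmn
      have hlow : (fun z => (z - z₀) ^ m) =O[𝓝 z₀] f := by
        have hpos : 0 < ‖u z₀‖ / 2 := by positivity
        have hnear : ∀ᶠ z in 𝓝 z₀, ‖u z₀‖ / 2 < ‖u z‖ :=
          hu.continuousAt.norm.eventually (lt_mem_nhds (by linarith))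
        refine IsBigO.of_bound (‖u z₀‖ / 2)⁻¹ ?_
        filter_upwards [hnear, hfu] with z hz hfz
        rw [hfz, norm_smul, inv_mul_eq_div, le_div_iff₀ hpos]
        exact mul_le_mul_of_nonneg_left hz.le (norm_nonneg _)
      have hsmall := (hlow.trans h).trans_isLittleO ((isLittleO_pow_pow hmn).comp_tendsto hsub)
      refine isLittleO_irrefl ?_ hsmall
      refine ((eventually_mem_nhdsWithin (a := z₀) (s := {z₀}ᶜ)).mono fun z hz => ?_).frequently
        |>.filter_mono nhdsWithin_le_nhds
      exact pow_ne_zero _ (sub_ne_zero.2 hz)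

theorem min_analyticOrderAt_le_of_add_add_eq_zero {u v w : 𝕜 → E}
    (h : ∀ᶠ z in 𝓝 z₀, u z + v z + w z = 0) :
    min (analyticOrderAt v z₀) (analyticOrderAt w z₀) ≤ analyticOrderAt u z₀ := by
  have huvw : u =ᶠ[𝓝 z₀] -(v + w) := by
    filter_upwards [h] with z hz
    rw [Pi.neg_apply, Pi.add_apply, eq_neg_iff_add_eq_zero, ← add_assoc, hz]
  rw [analyticOrderAt_congr huvw, analyticOrderAt_neg]
  exact le_analyticOrderAt_add

end AnalyticOrder

namespace Polynomial

variable {𝕜 : Type*} [NontriviallyNormedField 𝕜]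

theorem analyticOrderAt_eval_eq_rootMultiplicity {p : 𝕜[X]} (hp : p ≠ 0) (a : 𝕜) :
    analyticOrderAt (fun z => p.eval z) a = p.rootMultiplicity a := by
  obtain ⟨q, hpq, hq⟩ := p.exists_eq_pow_rootMultiplicity_mul_and_not_dvd hp a
  refine (AnalyticOnNhd.eval_polynomial p a trivial).analyticOrderAt_eq_natCast.mpr
    ⟨fun z => q.eval z, AnalyticOnNhd.eval_polynomial q a trivial,
      fun h => hq (dvd_iff_isRoot.mpr h), .of_forall fun z => ?_⟩
  conv_lhs => rw [hpq]
  simp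

theorem coeff_eq_zero_of_isBigO_pow {p : 𝕜[X]} {m : ℕ}
    (h : (fun z => p.eval z) =O[𝓝 0] (· ^ m)) {j : ℕ} (hj : j < m) : p.coeff j = 0 := by
  rcases eq_or_ne p 0 with rfl | hp
  · simp
  have hm := (AnalyticOnNhd.eval_polynomial p 0 trivial).natCast_le_analyticOrderAt_iff_isBigO.2
    (by simpa using h)
  rw [analyticOrderAt_eval_eq_rootMultiplicity hp, Nat.cast_le, le_rootMultiplicity_iff hp,
    map_zero, sub_zero] at hm
  exact X_pow_dvd_iff.mp hm j hj

end Polynomial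

theorem Asymptotics.isBigO_pow_pow_of_le {𝕜 : Type*} [NormedField 𝕜] {m n : ℕ} (h : m ≤ n) :
    (fun x : 𝕜 => x ^ n) =O[𝓝 0] fun x => x ^ m := by
  rcases h.eq_or_lt with rfl | h
  · exact isBigO_refl _ _
  · exact (isLittleO_pow_pow h).isBigO

namespace MvPolynomial

variable {σ : Type*}

theorem IsWeightedHomogeneous.eval_pow_mul {R : Type*} [CommSemiring R] {w : σ → ℕ}
    {φ : MvPolynomial σ R} {d : ℕ} (hφ : IsWeightedHomogeneous w φ d) (t : R) (P : σ → R) :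
    eval (fun j => t ^ w j * P j) φ = t ^ d * eval P φ := by
  induction hφ using IsWeightedHomogeneous.induction_on with
  | zero => simp
  | add p q _ _ hp hq => simp [hp, hq, mul_add]
  | monomial m r hr =>
    simp only [eval_monomial, Finsupp.prod, mul_pow, Finset.prod_mul_distrib, ← pow_mul,
      Finset.prod_pow_eq_pow_sum, ← hr, Finsupp.weight_apply, Finsupp.sum, smul_eq_mul, mul_comm]
    ring

theorem le_weight_of_mem_support_sub_sum_weightedHomogeneousComponent {R : Type*} [CommRing R]
    {w : σ → ℕ} {φ : MvPolynomial σ R} {N : ℕ} {m : σ →₀ ℕ}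
    (hm : m ∈ (φ - ∑ d ∈ Finset.range N, weightedHomogeneousComponent w d φ).support) :
    N ≤ Finsupp.weight w m := by
  by_contra! hlt
  refine (mem_support_iff.mp hm) ?_
  simp [coeff_sum, coeff_weightedHomogeneousComponent, hlt]

theorem sum_smul_eval {R ι : Type*} [CommSemiring R] (s : Finset ι) (c : ι → R)
    (φ : ι → MvPolynomial σ R) :
    ∑ k ∈ s, c k • (fun x => eval x (φ k)) = fun x => eval x (∑ k ∈ s, c k • φ k) := by
  ext x
  simp [Finset.sum_apply, map_sum]

theorem isBigO_eval_of_le_weight {𝕜 : Type*} [NormedField 𝕜] {w : σ → ℕ} {u : σ → 𝕜 → 𝕜}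
    (hu : ∀ j, u j =O[𝓝 0] (· ^ w j)) {φ : MvPolynomial σ 𝕜} {d : ℕ}
    (hφ : ∀ m ∈ φ.support, d ≤ Finsupp.weight w m) :
    (fun t => eval (fun j => u j t) φ) =O[𝓝 0] (· ^ d) := by
  simp only [eval_eq]
  refine IsBigO.fun_sum fun m hm => ?_
  have hmon : (fun t => ∏ j ∈ m.support, u j t ^ m j) =O[𝓝 0] (· ^ Finsupp.weight w m) := by
    refine (IsBigO.finsetProd (s := m.support) fun j _ => (hu j).pow (m j)).congr
      (fun t => rfl) fun t => ?_
    simp [← pow_mul, Finset.prod_pow_eq_pow_sum, Finsupp.weight_apply, Finsupp.sum, mul_comm]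
  exact (hmon.trans (isBigO_pow_pow_of_le (hφ m hm))).const_mul_left _

end MvPolynomial

namespace FormalMultilinearSeries

variable {𝕜 σ : Type*} [NontriviallyNormedField 𝕜] [Fintype σ] [DecidableEq σ]

noncomputable def partialSumPoly (p : FormalMultilinearSeries 𝕜 (σ → 𝕜) 𝕜) (n : ℕ) :
    MvPolynomial σ 𝕜 :=
  ∑ k ∈ Finset.range n, ∑ r : Fin k → σ,
    MvPolynomial.C (p k fun l => Pi.single (r l) 1) * ∏ l, MvPolynomial.X (r l)

theorem eval_partialSumPoly (p : FormalMultilinearSeries 𝕜 (σ → 𝕜) 𝕜) (n : ℕ) (y : σ → 𝕜) :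
    MvPolynomial.eval y (p.partialSumPoly n) = p.partialSum n y := by
  simp only [partialSumPoly, partialSum, map_sum, map_mul, MvPolynomial.eval_C, map_prod,
    MvPolynomial.eval_X]
  refine Finset.sum_congr rfl fun k _ => ?_
  have hy : y = ∑ j, y j • Pi.single j 1 := by simp [← Pi.single_smul', Finset.univ_sum_single]
  have hexp := (p k).map_sum fun (_ : Fin k) j => y j • (Pi.single j 1 : σ → 𝕜)
  rw [← hy] at hexp
  rw [hexp]
  refine Finset.sum_congr rfl fun r _ => ?_
  rw [(p k).map_smul_univ (fun l => y (r l)) fun l => Pi.single (r l) 1, smul_eq_mul, mul_comm]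

end FormalMultilinearSeries

theorem HasFPowerSeriesAt.isBigO_comp_sub_eval_partialSumPoly {𝕜 σ : Type*}
    [NontriviallyNormedField 𝕜] [Fintype σ] [DecidableEq σ] {g : (σ → 𝕜) → 𝕜}
    {p : FormalMultilinearSeries 𝕜 (σ → 𝕜) 𝕜} (hp : HasFPowerSeriesAt g p 0)
    {γ : 𝕜 → σ → 𝕜} (hγ : γ =O[𝓝 0] id) (n : ℕ) :
    (fun t => g (γ t) - MvPolynomial.eval (γ t) (p.partialSumPoly n)) =O[𝓝 0] (· ^ n) := by
  have hγ0 : Tendsto γ (𝓝 0) (𝓝 0) := hγ.trans_tendsto tendsto_id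
  have := ((hp.isBigO_sub_partialSum_pow n).comp_tendsto hγ0).trans (hγ.norm_left.pow n)
  simpa [Function.comp_def, FormalMultilinearSeries.eval_partialSumPoly] using this

theorem Arc.isBigO_id {N : ℕ} {f : (Fin N → ℂ) → ℂ} (ψ : Arc N f) : ψ.toFun =O[𝓝 0] id := by
  have := ψ.analyticAt.differentiableAt.isBigO_sub
  simp only [ψ.map_zero, sub_zero] at this
  exact this

theorem Arc.analyticAt_comp {N : ℕ} {f : (Fin N → ℂ) → ℂ} (ψ : Arc N f)
    {g : (Fin N → ℂ) → ℂ} (hg : AnalyticAt ℂ g 0) : AnalyticAt ℂ (g ∘ ψ.toFun) 0 :=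
  (ψ.map_zero ▸ hg).comp ψ.analyticAt

theorem mem_arcFiltration_iff_isBigO {N : ℕ} {f g : (Fin N → ℂ) → ℂ} (hg : AnalyticAt ℂ g 0)
    {i : ℕ} : g ∈ arcFiltration N f i ↔ ∀ ψ : Arc N f, (g ∘ ψ.toFun) =O[𝓝 0] (· ^ i) := by
  simp only [arcFiltration, Set.mem_ofPred_eq, hg, true_and, vArc, le_iInf_iff]
  refine forall_congr' fun ψ => ?_
  have hgψ := ψ.analyticAt_comp hg
  rw [ord, dif_pos hgψ, hgψ.natCast_le_analyticOrderAt_iff_isBigO]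
  simp

theorem dimQuotEq_card_of_existsUnique {M ι : Type*} [AddCommGroup M] [Module ℂ M] [Fintype ι]
    {F : ℕ → Set M} {i : ℕ} (b : ι → M) (hb : ∀ k, b k ∈ F i)
    (h : ∀ g ∈ F i, ∃! c : ι → ℂ, g - ∑ k, c k • b k ∈ F (i + 1)) :
    dimQuotEq F i (Fintype.card ι) := by
  set e := Fintype.equivFin ι
  have hsum (c : ι → ℂ) : ∑ k, c (e.symm k) • b (e.symm k) = ∑ k, c k • b k :=
    e.symm.sum_comp fun k => c k • b k
  refine ⟨b ∘ e.symm, fun k => hb _, fun g hg => ?_⟩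
  obtain ⟨c, hc, huniq⟩ := h g hg
  refine ⟨c ∘ e.symm, by simpa [hsum] using hc, fun c' hc' => ?_⟩
  have := huniq (c' ∘ e) (by simpa [← hsum] using hc')
  ext k
  simp [← this]

namespace T236

open MvPolynomial

def f (w : Fin 3 → ℂ) : ℂ := w 0 ^ 6 + w 1 ^ 3 + w 2 ^ 2

def weight (j : Fin 3) : ℕ := j + 1

theorem two_le_and_three_le_of_min_le {a b c : ℕ∞} (ha : 1 ≤ a) (hb : 1 ≤ b) (hc : 1 ≤ c)
    (hb' : min (6 • a) (2 • c) ≤ 3 • b) (hc' : min (6 • a) (3 • b) ≤ 2 • c) :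
    2 ≤ b ∧ 3 ≤ c := by
  induction a <;> induction b <;> induction c <;> simp_all <;> norm_cast at * <;> omega

theorem isBigO_arc_coord (ψ : Arc 3 f) (j : Fin 3) :
    (fun τ => ψ.toFun τ j) =O[𝓝 0] (· ^ weight j) := by
  set u : Fin 3 → ℂ → ℂ := fun j τ => ψ.toFun τ j
  have hu (j : Fin 3) : AnalyticAt ℂ (u j) 0 := analyticAt_pi_iff.1 ψ.analyticAt j
  have hord (j : Fin 3) : 1 ≤ analyticOrderAt (u j) 0 :=
    Order.one_le_iff_ne_zero.2 ((hu j).analyticOrderAt_ne_zero.2 (congrFun ψ.map_zero j))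
  have hvan : ∀ᶠ τ in 𝓝 0, (u 0 ^ 6) τ + (u 1 ^ 3) τ + (u 2 ^ 2) τ = 0 := ψ.vanish
  have hy := min_analyticOrderAt_le_of_add_add_eq_zero (u := u 1 ^ 3) (v := u 0 ^ 6)
    (w := u 2 ^ 2) (by filter_upwards [hvan] with τ h; linear_combination h)
  have hz := min_analyticOrderAt_le_of_add_add_eq_zero (u := u 2 ^ 2) (v := u 0 ^ 6)
    (w := u 1 ^ 3) (by filter_upwards [hvan] with τ h; linear_combination h)
  simp only [analyticOrderAt_pow (hu _)] at hy hz
  obtain ⟨hy2, hz3⟩ := two_le_and_three_le_of_min_le (hord 0) (hord 1) (hord 2) hy hz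
  have hle (j : Fin 3) : (weight j : ℕ∞) ≤ analyticOrderAt (u j) 0 := by
    fin_cases j
    exacts [hord 0, hy2, hz3]
  simpa using (hu j).natCast_le_analyticOrderAt_iff_isBigO.1 (hle j)

theorem f_pow_mul (t : ℂ) (P : Fin 3 → ℂ) : f (fun j => t ^ weight j * P j) = t ^ 6 * f P := by
  simp [f, weight]
  ring

abbrev Cone := {P : Fin 3 → ℂ // f P = 0}

def coneArc (P : Cone) : Arc 3 f where
  toFun τ j := τ ^ weight j * P.1 j
  analyticAt := AnalyticAt.pi fun j => by fun_prop
  map_zero := by ext j; simp [weight]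
  vanish := .of_forall fun τ => by rw [f_pow_mul, P.2, mul_zero]

noncomputable def restrictToCone : MvPolynomial (Fin 3) ℂ →ₐ[ℂ] (Cone → ℂ) :=
  aeval fun j P => P.1 j

@[simp]
theorem restrictToCone_apply (φ : MvPolynomial (Fin 3) ℂ) (P : Cone) :
    restrictToCone φ P = eval P.1 φ := by
  induction φ using MvPolynomial.induction_on <;> simp_all [restrictToCone]

theorem restrictToCone_X_two_sq :
    restrictToCone (X 2) ^ 2 = -(restrictToCone (X 0 ^ 6) + restrictToCone (X 1 ^ 3)) := by
  ext P
  simp only [Pi.pow_apply, Pi.neg_apply, Pi.add_apply, restrictToCone_apply, map_pow, eval_X]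
  have hP : P.1 0 ^ 6 + P.1 1 ^ 3 + P.1 2 ^ 2 = 0 := P.2
  linear_combination hP

/- The monomials of weight `i` and degree `≤ 1` in `z`: `x^(i-2b) y^b` for `2b ≤ i` and
`x^(i-3-2b) y^b z` for `2b + 3 ≤ i` (for `i = 0` too, as `(0 - 1) / 2 = 0` in `ℕ`). On `V` the
relation `z² = -x⁶ - y³` reduces every other monomial to these. -/
abbrev BasisIndex (i : ℕ) := Fin (i / 2 + 1) ⊕ Fin ((i - 1) / 2)

noncomputable def basisMonomial (i : ℕ) : BasisIndex i → MvPolynomial (Fin 3) ℂ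
  | .inl b => X 0 ^ (i - 2 * b) * X 1 ^ (b : ℕ)
  | .inr b => X 0 ^ (i - 3 - 2 * b) * X 1 ^ (b : ℕ) * X 2

theorem isWeightedHomogeneous_basisMonomial (i : ℕ) (k : BasisIndex i) :
    IsWeightedHomogeneous weight (basisMonomial i k) i := by
  have hX (j : Fin 3) := isWeightedHomogeneous_X ℂ weight j
  rcases k with ⟨b, hb⟩ | ⟨b, hb⟩
  · convert ((hX 0).pow (i - 2 * b)).mul ((hX 1).pow b) using 1
    · rfl
    · simp [weight]
      omega
  · convert (((hX 0).pow (i - 3 - 2 * b)).mul ((hX 1).pow b)).mul (hX 2) using 1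
    · rfl
    · simp [weight]
      omega

theorem restrictToCone_monomial_mem_span {i a b c : ℕ} (h : a + 2 * b + 3 * c = i) :
    restrictToCone (X 0 ^ a * X 1 ^ b * X 2 ^ c) ∈
      Submodule.span ℂ (Set.range (restrictToCone ∘ basisMonomial i)) := by
  induction c using Nat.strong_induction_on generalizing a b with
  | _ c ih =>
  match c with
  | 0 =>
    refine Submodule.subset_span ⟨.inl ⟨b, by omega⟩, ?_⟩
    simp only [Function.comp_apply, basisMonomial, pow_zero, mul_one]
    congr 3
    omega
  | 1 =>
    refine Submodule.subset_span ⟨.inr ⟨b, by omega⟩, ?_⟩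
    simp only [Function.comp_apply, basisMonomial, pow_one]
    congr 4
    omega
  | c + 2 =>
    have hred : restrictToCone (X 0 ^ a * X 1 ^ b * X 2 ^ (c + 2)) =
        -restrictToCone (X 0 ^ (a + 6) * X 1 ^ b * X 2 ^ c) -
          restrictToCone (X 0 ^ a * X 1 ^ (b + 3) * X 2 ^ c) := by
      have hsq := restrictToCone_X_two_sq
      simp only [map_mul, map_pow] at hsq ⊢
      rw [pow_add _ c 2, hsq]
      ring
    rw [hred]
    exact sub_mem (neg_mem (ih c (by omega) (by omega))) (ih c (by omega) (by omega))

theorem restrictToCone_mem_span {i : ℕ} {φ : MvPolynomial (Fin 3) ℂ}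
    (hφ : IsWeightedHomogeneous weight φ i) :
    restrictToCone φ ∈ Submodule.span ℂ (Set.range (restrictToCone ∘ basisMonomial i)) := by
  induction hφ using IsWeightedHomogeneous.induction_on with
  | zero => simp
  | add p q _ _ hp hq => simpa using add_mem hp hq
  | monomial m r hr =>
    rw [monomial_eq, ← smul_eq_C_mul, map_smul, Finsupp.prod_fintype _ _ (by simp),
      Fin.prod_univ_three]
    refine Submodule.smul_mem _ _ (restrictToCone_monomial_mem_span ?_)
    simpa [Finsupp.weight_apply, Finsupp.sum_fintype, Fin.sum_univ_three, weight, mul_comm]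
      using hr

theorem linearIndependent_restrictToCone_basisMonomial (i : ℕ) :
    LinearIndependent ℂ (restrictToCone ∘ basisMonomial i) := by
  rw [Fintype.linearIndependent_iff]
  intro g hg
  have hpoint (w μ : ℂ) (hμ : μ ^ 2 = -(1 + w ^ 3)) :
      (∑ b, g (.inl b) * w ^ (b : ℕ)) + μ * ∑ b, g (.inr b) * w ^ (b : ℕ) = 0 := by
    have hP : f ![1, w, μ] = 0 := by
      simp only [f, Matrix.cons_val]
      linear_combination hμ
    simpa [Fintype.sum_sum_type, basisMonomial, Finset.mul_sum, mul_comm, mul_left_comm, mul_assoc]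
      using congrFun hg ⟨_, hP⟩
  -- The relations at `(1, w, μ)` and `(1, w, -μ)` separate the two families.
  have hvanish (w : ℂ) : ∑ b, g (.inl b) * w ^ (b : ℕ) = 0 ∧
      (1 + w ^ 3 ≠ 0 → ∑ b, g (.inr b) * w ^ (b : ℕ) = 0) := by
    obtain ⟨μ, hμ⟩ := IsAlgClosed.exists_pow_nat_eq (-(1 + w ^ 3)) two_pos
    have hpos := hpoint w μ hμ
    have hneg := hpoint w (-μ) (by rwa [neg_sq])
    refine ⟨by linear_combination (hpos + hneg) / 2, fun hw => ?_⟩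
    have hμ0 : μ ≠ 0 := by
      rintro rfl
      exact hw (by linear_combination hμ)
    exact (mul_eq_zero.1 (by linear_combination (hpos - hneg) / 2)).resolve_left hμ0
  have hinj (n : ℕ) : Function.Injective fun j : Fin n => ((j : ℕ) : ℂ) :=
    Nat.cast_injective.comp Fin.val_injective
  have hinl := Matrix.eq_zero_of_forall_index_sum_mul_pow_eq_zero (hinj _)
    fun j => (hvanish _).1
  have hinr := Matrix.eq_zero_of_forall_index_sum_mul_pow_eq_zero (hinj _)
    fun j => (hvanish _).2 (by norm_cast; positivity)
  rintro (b | b)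
  exacts [congrFun hinl b, congrFun hinr b]

theorem isBigO_arc_eval_of_le_weight (ψ : Arc 3 f) {φ : MvPolynomial (Fin 3) ℂ} {d : ℕ}
    (hφ : ∀ m ∈ φ.support, d ≤ Finsupp.weight weight m) :
    (fun τ => eval (ψ.toFun τ) φ) =O[𝓝 0] (· ^ d) :=
  MvPolynomial.isBigO_eval_of_le_weight (isBigO_arc_coord ψ) hφ

theorem arc_eval_eventuallyEq_of_restrictToCone_eq (ψ : Arc 3 f) {φ φ' : MvPolynomial (Fin 3) ℂ}
    (h : restrictToCone φ = restrictToCone φ') :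
    (fun τ => eval (ψ.toFun τ) φ) =ᶠ[𝓝 0] fun τ => eval (ψ.toFun τ) φ' := by
  filter_upwards [ψ.vanish] with τ hτ
  simpa using congrFun h ⟨ψ.toFun τ, hτ⟩

theorem eval_coneArc {φ : MvPolynomial (Fin 3) ℂ} {d : ℕ} (hφ : IsWeightedHomogeneous weight φ d)
    (P : Cone) (τ : ℂ) : eval ((coneArc P).toFun τ) φ = τ ^ d * eval P.1 φ :=
  hφ.eval_pow_mul τ P.1

theorem mem_arcFiltration_of_isWeightedHomogeneous {φ : MvPolynomial (Fin 3) ℂ} {i : ℕ}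
    (hφ : IsWeightedHomogeneous weight φ i) : (eval · φ) ∈ arcFiltration 3 f i :=
  (mem_arcFiltration_iff_isBigO (AnalyticOnNhd.eval_mvPolynomial φ 0 trivial)).2 fun ψ =>
    isBigO_arc_eval_of_le_weight ψ fun _ hm => (hφ (mem_support_iff.1 hm)).ge

theorem restrictToCone_weightedHomogeneousComponent_eq_zero {Q : MvPolynomial (Fin 3) ℂ} {m : ℕ}
    (hQ : ∀ P : Cone, (fun τ => eval ((coneArc P).toFun τ) Q) =O[𝓝 0] (· ^ m)) {d : ℕ}
    (hd : d < m) : restrictToCone (weightedHomogeneousComponent weight d Q) = 0 := by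
  ext P
  set L := ∑ e ∈ Finset.range m, weightedHomogeneousComponent weight e Q
  set p : Polynomial ℂ := ∑ e ∈ Finset.range m,
    Polynomial.C (eval P.1 (weightedHomogeneousComponent weight e Q)) * Polynomial.X ^ e
  have hpL (τ : ℂ) : p.eval τ = eval ((coneArc P).toFun τ) L := by
    simp only [p, L, Polynomial.eval_finsetSum, map_sum, Polynomial.eval_mul, Polynomial.eval_C,
      Polynomial.eval_pow, Polynomial.eval_X,
      eval_coneArc (weightedHomogeneousComponent_isWeightedHomogeneous _ _), mul_comm]
  have hhigh := isBigO_arc_eval_of_le_weight (coneArc P) (φ := Q - L) (d := m)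
    fun _ hm' => le_weight_of_mem_support_sub_sum_weightedHomogeneousComponent hm'
  have hp : (fun τ => p.eval τ) =O[𝓝 0] (· ^ m) :=
    ((hQ P).sub hhigh).congr (fun τ => by simp [hpL]) fun _ => rfl
  simpa [p, Polynomial.finsetSum_coeff, Polynomial.coeff_C_mul_X_pow, hd]
    using Polynomial.coeff_eq_zero_of_isBigO_pow hp hd

theorem exists_sub_sum_mem_arcFiltration {i : ℕ} {g : (Fin 3 → ℂ) → ℂ}
    (hg : g ∈ arcFiltration 3 f i) : ∃ c : BasisIndex i → ℂ,
      g - ∑ k, c k • (eval · (basisMonomial i k)) ∈ arcFiltration 3 f (i + 1) := by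
  obtain ⟨p, hp⟩ := hg.1
  set Q := p.partialSumPoly (i + 1)
  have hgQ (ψ : Arc 3 f) :
      (fun τ => g (ψ.toFun τ) - eval (ψ.toFun τ) Q) =O[𝓝 0] (· ^ (i + 1)) :=
    hp.isBigO_comp_sub_eval_partialSumPoly ψ.isBigO_id _
  have hQ (P : Cone) : (fun τ => eval ((coneArc P).toFun τ) Q) =O[𝓝 0] (· ^ i) := by
    have hgP := (mem_arcFiltration_iff_isBigO hg.1).1 hg (coneArc P)
    refine (hgP.sub ((hgQ (coneArc P)).trans (isBigO_pow_pow_of_le i.le_succ))).congr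
      (fun τ => ?_) fun _ => rfl
    simp
  set L := ∑ e ∈ Finset.range (i + 1), weightedHomogeneousComponent weight e Q
  obtain ⟨c, hc⟩ := (Submodule.mem_span_range_iff_exists_fun ℂ).1
    (restrictToCone_mem_span (weightedHomogeneousComponent_isWeightedHomogeneous i Q))
  have hL : restrictToCone L = restrictToCone (∑ k, c k • basisMonomial i k) := by
    rw [map_sum, Finset.sum_range_succ, Finset.sum_eq_zero fun e he =>
      restrictToCone_weightedHomogeneousComponent_eq_zero hQ (Finset.mem_range.1 he), zero_add,
      ← hc]
    simp [map_sum]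
  refine ⟨c, ?_⟩
  rw [MvPolynomial.sum_smul_eval, mem_arcFiltration_iff_isBigO
    (hg.1.sub (AnalyticOnNhd.eval_mvPolynomial _ 0 trivial))]
  intro ψ
  have hhigh := isBigO_arc_eval_of_le_weight ψ (φ := Q - L) (d := i + 1)
    fun _ hm => le_weight_of_mem_support_sub_sum_weightedHomogeneousComponent hm
  refine ((hgQ ψ).add hhigh).congr' ?_ EventuallyEq.rfl
  filter_upwards [arc_eval_eventuallyEq_of_restrictToCone_eq ψ hL] with τ hτ
  simp only [map_sub, Function.comp_apply, Pi.sub_apply] at hτ ⊢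
  rw [← hτ]
  ring

theorem eq_of_sub_sum_mem_arcFiltration {i : ℕ} {g : (Fin 3 → ℂ) → ℂ} {c c' : BasisIndex i → ℂ}
    (hc : g - ∑ k, c k • (eval · (basisMonomial i k)) ∈ arcFiltration 3 f (i + 1))
    (hc' : g - ∑ k, c' k • (eval · (basisMonomial i k)) ∈ arcFiltration 3 f (i + 1)) :
    c = c' := by
  set φ := ∑ k, (c' k - c k) • basisMonomial i k
  have hφ : IsWeightedHomogeneous weight φ i :=
    (weightedHomogeneousSubmodule ℂ weight i).sum_mem fun k _ =>
      Submodule.smul_mem _ _ (isWeightedHomogeneous_basisMonomial i k)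
  have hvan : restrictToCone φ = 0 := by
    ext P
    have hdiff := ((mem_arcFiltration_iff_isBigO hc.1).1 hc (coneArc P)).sub
      ((mem_arcFiltration_iff_isBigO hc'.1).1 hc' (coneArc P))
    have hp : (fun τ => (Polynomial.C (eval P.1 φ) * Polynomial.X ^ i).eval τ) =O[𝓝 0]
        (· ^ (i + 1)) := by
      have hφ' : φ = ∑ k, c' k • basisMonomial i k - ∑ k, c k • basisMonomial i k := by
        simp only [φ, sub_smul, Finset.sum_sub_distrib]
      refine hdiff.congr (fun τ => ?_) fun _ => rfl
      rw [MvPolynomial.sum_smul_eval, MvPolynomial.sum_smul_eval, Polynomial.eval_mul,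
        Polynomial.eval_C, Polynomial.eval_pow, Polynomial.eval_X, mul_comm, ← eval_coneArc hφ,
        hφ', map_sub]
      simp only [Function.comp_apply, Pi.sub_apply]
      ring
    simpa using Polynomial.coeff_eq_zero_of_isBigO_pow hp i.lt_succ_self
  have := Fintype.linearIndependent_iff.1 (linearIndependent_restrictToCone_basisMonomial i)
    (fun k => c' k - c k) (by simpa [φ, map_sum] using hvan)
  ext k
  exact (sub_eq_zero.1 (this k)).symm

theorem dimQuotEq_arcFiltration (i : ℕ) :
    dimQuotEq (arcFiltration 3 f) i (i / 2 + 1 + (i - 1) / 2) := by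
  have hmem (k : BasisIndex i) : (eval · (basisMonomial i k)) ∈ arcFiltration 3 f i :=
    mem_arcFiltration_of_isWeightedHomogeneous (isWeightedHomogeneous_basisMonomial i k)
  simpa using dimQuotEq_card_of_existsUnique _ hmem fun g hg =>
    let ⟨c, hc⟩ := exists_sub_sum_mem_arcFiltration hg
    ⟨c, hc, fun _ hc' => eq_of_sub_sum_mem_arcFiltration hc' hc⟩

end T236

open PowerSeries in
theorem T236.mk_mul_eq_one_sub_X_pow_six :
    (mk fun i => ((i / 2 + 1 + (i - 1) / 2 : ℕ) : ℤ)) * ((1 - X) * (1 - X ^ 2) * (1 - X ^ 3)) =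
      1 - X ^ 6 := by
  have hden : ((1 - X) * (1 - X ^ 2) * (1 - X ^ 3) : ℤ⟦X⟧) =
      1 - X ^ 1 - X ^ 2 + X ^ 4 + X ^ 5 - X ^ 6 := by ring
  rw [hden]
  ext n
  simp only [mul_sub, mul_add, mul_one, map_sub, map_add, coeff_one, coeff_mul_X_pow',
    coeff_mk, coeff_X_pow]
  push_cast
  split_ifs <;> omega

/-- For the parabolic surface singularity `T_{2,3,6}` (= `J₁₀`),
i.e. `(V,0) ⊆ (ℂ³,0)` defined by `x⁶ + y³ + z² = 0`, the Poincaré series of the arc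
filtration is `P_{V,0}(t) = (1 - t⁶)/((1 - t)(1 - t²)(1 - t³))`. -/
theorem poincare_series_T236 :
    ∃ dimF : ℕ → ℕ,
      (∀ i, dimQuotEq
        (arcFiltration 3 (fun w : Fin 3 → ℂ => w 0 ^ 6 + w 1 ^ 3 + w 2 ^ 2)) i
        (dimF i)) ∧
      (PowerSeries.mk fun i => (dimF i : ℤ)) *
          ((1 - PowerSeries.X) * (1 - PowerSeries.X ^ 2) * (1 - PowerSeries.X ^ 3))
        = 1 - PowerSeries.X ^ 6 :=
  ⟨_, T236.dimQuotEq_arcFiltration, T236.mk_mul_eq_one_sub_X_pow_six⟩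
end

section
/- For the parabolic surface singularity T_{3,3,3} (= P₈), i.e., the surface germ (V,0) ⊂ (ℂ³,0) defined by x³ + y³ + z³ = 0, the Poincaré series of the arc filtration is P_{V,0}(t) = (1 − t³) / (1 − t)³, as an identity of formal power series; equivalently dim_ℂ(F_0/F_1) = 1 and dim_ℂ(F_i/F_{i+1}) = 3i for i ≥ 1. -/
open Filter
open scoped Classical

/-!
`V` is a cone, so for every `v ∈ V` the line `τ ↦ τ • v` is an arc. Along these lines, `g ∈ F_i`
forces the Taylor terms of `g` of degree `< i` to vanish on `V`; conversely, a germ that agrees on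
`V` with something `O(‖w‖ ^ (i + 1))` lies in `F_{i+1}`, because arcs are `O(τ)`. Hence
`F_i / F_{i+1}` is the degree-`i` part of `ℂ[x, y, z] / (x³ + y³ + z³)`. Dividing by the cubic,
which is monic in `x`, this space has the basis of monomials `x^a y^b z^c` with `a ≤ 2` and
`a + b + c = i`: a polynomial of `x`-degree `≤ 2` vanishing on `V` is zero, since over each `(y, z)`
with `y³ + z³ ≠ 0` there are three points of `V`. Counting gives `1` for `i = 0` and
`(i + 1) + i + (i - 1) = 3i` for `i ≥ 1`, and `1 + ∑_{i ≥ 1} 3i tⁱ = (1 + t + t²) / (1 - t)²`.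
-/

open MvPolynomial Asymptotics
open scoped Topology

lemma analyticOrderAt_pow_mul_const {𝕜 : Type*} [NontriviallyNormedField 𝕜] {a : 𝕜}
    (ha : a ≠ 0) (i : ℕ) : analyticOrderAt (fun τ : 𝕜 => τ ^ i * a) 0 = i :=
  (analyticAt_id.pow i |>.mul analyticAt_const).analyticOrderAt_eq_natCast.mpr
    ⟨fun _ => a, analyticAt_const, ha, by simp⟩

lemma natCast_le_analyticOrderAt_of_isBigO {h : ℂ → ℂ} (hh : AnalyticAt ℂ h 0) {n : ℕ}
    (hb : h =O[𝓝 0] fun τ => ‖τ‖ ^ n) : (n : ℕ∞) ≤ analyticOrderAt h 0 := by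
  by_contra hlt
  rw [not_le] at hlt
  obtain ⟨m, hm⟩ := ENat.ne_top_iff_exists.mp hlt.ne_top
  have hmn : m < n := by rw [← hm] at hlt; exact_mod_cast hlt
  obtain ⟨u, hu, hu0, heq⟩ := hh.analyticOrderAt_eq_natCast.mp hm.symm
  obtain ⟨C, hC⟩ := hb.bound
  -- dividing `h τ = τ ^ m * u τ` by `τ ^ m` leaves `‖u τ‖ ≤ C ‖τ‖ ^ (n - m)`, which tends to `0`
  have hu_le : ∀ᶠ τ : ℂ in 𝓝[≠] 0, ‖u τ‖ ≤ C * ‖τ‖ ^ (n - m) := by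
    filter_upwards [eventually_nhdsWithin_of_eventually_nhds (hC.and heq),
      self_mem_nhdsWithin] with τ ⟨hτC, hτu⟩ hτ0
    have hpos : 0 < ‖τ‖ ^ m := pow_pos (norm_pos_iff.mpr hτ0) m
    rw [hτu, sub_zero, smul_eq_mul, norm_mul, norm_pow, norm_pow, norm_norm,
      ← Nat.add_sub_cancel' hmn.le, pow_add] at hτC
    nlinarith
  have hlim : Tendsto (fun τ : ℂ => C * ‖τ‖ ^ (n - m)) (𝓝[≠] 0) (𝓝 0) := by
    have : Tendsto (fun τ : ℂ => C * ‖τ‖ ^ (n - m)) (𝓝 0) (𝓝 (C * ‖(0 : ℂ)‖ ^ (n - m))) :=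
      (continuous_const.mul (continuous_norm.pow _)).tendsto 0
    rw [norm_zero, zero_pow (by omega), mul_zero] at this
    exact this.mono_left nhdsWithin_le_nhds
  have hcont : Tendsto (fun τ => ‖u τ‖) (𝓝[≠] 0) (𝓝 ‖u 0‖) :=
    hu.continuousAt.norm.tendsto.mono_left nhdsWithin_le_nhds
  exact hu0 (norm_le_zero_iff.mp (le_of_tendsto_of_tendsto hcont hlim hu_le))

lemma HasFPowerSeriesAt.natCast_le_analyticOrderAt_comp_smul_iff {E : Type*}
    [NormedAddCommGroup E] [NormedSpace ℂ E] {g : E → ℂ}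
    {p : FormalMultilinearSeries ℂ E ℂ} (hp : HasFPowerSeriesAt g p 0) (v : E) {n : ℕ} :
    (n : ℕ∞) ≤ analyticOrderAt (fun τ : ℂ => g (τ • v)) 0 ↔ ∀ j < n, p j (fun _ => v) = 0 := by
  set L : ℂ →L[ℂ] E := (ContinuousLinearMap.id ℂ ℂ).smulRight v
  have hL : HasFPowerSeriesAt (g ∘ L) (p.compContinuousLinearMap L) 0 :=
    HasFPowerSeriesAt.compContinuousLinearMap (by simpa [L] using hp)
  obtain ⟨r, hr⟩ := hL
  rw [show (fun τ : ℂ => g (τ • v)) = g ∘ L from rfl,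
    natCast_le_analyticOrderAt_iff_iteratedDeriv_eq_zero hr.analyticAt]
  refine forall₂_congr fun j _ => ?_
  rw [iteratedDeriv_eq_iteratedFDeriv, ← hr.factorial_smul, nsmul_eq_mul,
    mul_eq_zero_iff_left (by exact_mod_cast j.factorial_ne_zero)]
  simp [L, FormalMultilinearSeries.compContinuousLinearMap]

section Arcs

variable {N : ℕ} {f : (Fin N → ℂ) → ℂ}

def Arc.line (v : Fin N → ℂ) (hv : ∀ τ : ℂ, f (τ • v) = 0) : Arc N f where
  toFun τ := τ • v
  analyticAt := ((ContinuousLinearMap.id ℂ ℂ).smulRight v).analyticAt 0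
  map_zero := zero_smul ℂ v
  vanish := Eventually.of_forall hv

lemma AnalyticAt.comp_arc {g : (Fin N → ℂ) → ℂ} (hg : AnalyticAt ℂ g 0) (ψ : Arc N f) :
    AnalyticAt ℂ (g ∘ ψ.toFun) 0 :=
  AnalyticAt.comp (by rwa [ψ.map_zero]) ψ.analyticAt

lemma mem_arcFiltration_iff {g : (Fin N → ℂ) → ℂ} {n : ℕ} :
    g ∈ arcFiltration N f n ↔
      AnalyticAt ℂ g 0 ∧ ∀ ψ : Arc N f, (n : ℕ∞) ≤ analyticOrderAt (g ∘ ψ.toFun) 0 := by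
  refine and_congr_right fun hg => ?_
  simp only [vArc, le_iInf_iff, ord, dif_pos (hg.comp_arc _)]

lemma sub_mem_arcFiltration {g h : (Fin N → ℂ) → ℂ} {n : ℕ} (hg : g ∈ arcFiltration N f n)
    (hh : h ∈ arcFiltration N f n) : g - h ∈ arcFiltration N f n := by
  rw [mem_arcFiltration_iff] at *
  exact ⟨hg.1.sub hh.1, fun ψ => (le_min (hg.2 ψ) (hh.2 ψ)).trans le_analyticOrderAt_sub⟩

-- Every arc is `O(τ)`, so a bound `O(‖w‖ ^ n)` becomes `O(|τ| ^ n)` along it.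
lemma mem_arcFiltration_of_eqOn_isBigO {g R : (Fin N → ℂ) → ℂ} {n : ℕ} (hg : AnalyticAt ℂ g 0)
    (hR : R =O[𝓝 0] fun w => ‖w‖ ^ n) (hgR : ∀ w, f w = 0 → g w = R w) :
    g ∈ arcFiltration N f n := by
  refine mem_arcFiltration_iff.mpr ⟨hg, fun ψ => ?_⟩
  refine natCast_le_analyticOrderAt_of_isBigO (hg.comp_arc ψ) ?_
  have hψ : (fun τ => ‖ψ.toFun τ‖) =O[𝓝 0] fun τ : ℂ => ‖τ‖ := by
    simpa [ψ.map_zero] using ψ.analyticAt.differentiableAt.isBigO_sub.norm_left.norm_right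
  have hRψ : (fun τ => R (ψ.toFun τ)) =O[𝓝 0] fun τ => ‖ψ.toFun τ‖ ^ n :=
    hR.comp_tendsto (by simpa [ψ.map_zero] using ψ.analyticAt.continuousAt.tendsto)
  refine EventuallyEq.trans_isBigO ?_ (hRψ.trans (hψ.pow n))
  filter_upwards [ψ.vanish] with τ hτ using hgR _ hτ

lemma HasFPowerSeriesAt.apply_eq_zero_of_mem_arcFiltration {g : (Fin N → ℂ) → ℂ}
    {p : FormalMultilinearSeries ℂ (Fin N → ℂ) ℂ} (hp : HasFPowerSeriesAt g p 0) {n : ℕ}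
    (hg : g ∈ arcFiltration N f n) {v : Fin N → ℂ} (hv : ∀ τ : ℂ, f (τ • v) = 0) {j : ℕ}
    (hj : j < n) : p j (fun _ => v) = 0 :=
  (hp.natCast_le_analyticOrderAt_comp_smul_iff v).mp
    ((mem_arcFiltration_iff.mp hg).2 (Arc.line v hv)) j hj

lemma apply_eq_zero_of_homogeneous_mem_arcFiltration {H : (Fin N → ℂ) → ℂ} {i : ℕ}
    (hH : ∀ (τ : ℂ) w, H (τ • w) = τ ^ i * H w) (hmem : H ∈ arcFiltration N f (i + 1))
    {v : Fin N → ℂ} (hv : ∀ τ : ℂ, f (τ • v) = 0) : H v = 0 := by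
  by_contra h0
  have h := (mem_arcFiltration_iff.mp hmem).2 (Arc.line v hv)
  rw [show H ∘ (Arc.line v hv).toFun = fun τ => τ ^ i * H v from funext fun τ => hH τ v,
    analyticOrderAt_pow_mul_const h0] at h
  exact absurd h (by norm_cast; omega)

end Arcs

section Polynomials

variable {σ R : Type*}

lemma MvPolynomial.IsHomogeneous.eval_smul [CommSemiring R] {φ : MvPolynomial σ R} {n : ℕ}
    (hφ : φ.IsHomogeneous n) (τ : R) (v : σ → R) : eval (τ • v) φ = τ ^ n * eval v φ := by
  simp only [eval_eq, Finset.mul_sum, Pi.smul_apply, smul_eq_mul, mul_pow,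
    Finset.prod_mul_distrib, Finset.prod_pow_eq_pow_sum]
  refine Finset.sum_congr rfl fun d hd => ?_
  rw [← hφ.degree_eq_sum_deg_support hd]
  ring

lemma MvPolynomial.IsHomogeneous.eval_smul_eq_zero [CommSemiring R] {φ : MvPolynomial σ R}
    {d : ℕ} (hφ : φ.IsHomogeneous d) {v : σ → R} (hv : eval v φ = 0) (τ : R) :
    eval (τ • v) φ = 0 := by
  rw [hφ.eval_smul, hv, mul_zero]

lemma MvPolynomial.analyticAt_eval {N : ℕ} (A : MvPolynomial (Fin N) ℂ) (x : Fin N → ℂ) :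
    AnalyticAt ℂ (fun w => eval w A) x :=
  AnalyticOnNhd.eval_continuousLinearMap (ContinuousLinearMap.id ℂ (Fin N → ℂ)) A x trivial

lemma isBigO_eval_monomial {N : ℕ} (d : Fin N →₀ ℕ) :
    (fun w : Fin N → ℂ => eval w (monomial d 1)) =O[𝓝 0] fun w => ‖w‖ ^ d.degree := by
  refine IsBigO.of_bound 1 (Eventually.of_forall fun w => ?_)
  rw [eval_monomial, one_mul, Finsupp.prod, norm_prod, one_mul, norm_pow, norm_norm,
    Finsupp.degree_apply, ← Finset.prod_pow_eq_pow_sum]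
  exact Finset.prod_le_prod (fun _ _ => by positivity)
    fun l _ => by rw [norm_pow]; exact pow_le_pow_left₀ (norm_nonneg _) (norm_le_pi_norm w l) _

lemma MvPolynomial.exists_eq_mul_add_degreeOf_le [CommRing R] {n d : ℕ}
    {f : MvPolynomial (Fin (n + 1)) R} (hf : (finSuccEquiv R n f).Monic)
    (hd : (finSuccEquiv R n f).natDegree = d + 1) (P : MvPolynomial (Fin (n + 1)) R) :
    ∃ Q A, P = f * Q + A ∧ A.degreeOf 0 ≤ d := by
  set e := finSuccEquiv R n
  refine ⟨e.symm (e P /ₘ e f), e.symm (e P %ₘ e f), e.injective ?_, ?_⟩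
  · rw [map_add, map_mul, e.apply_symm_apply, e.apply_symm_apply, add_comm (e f * _),
      Polynomial.modByMonic_add_div]
  · have hf1 : e f ≠ 1 := fun h => by simp [h] at hd
    have := Polynomial.natDegree_modByMonic_lt (e P) hf hf1
    rw [← natDegree_finSuccEquiv, e.apply_symm_apply]
    omega

attribute [local instance] MvPolynomial.gradedAlgebra in
lemma MvPolynomial.exists_eq_mul_add_homogeneousComponent [CommRing R]
    {f P A : MvPolynomial σ R} {d i : ℕ} (hf : f.IsHomogeneous d) (hP : P.IsHomogeneous i)
    (hPA : f ∣ P - A) :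
    ∃ Q, P = f * Q + homogeneousComponent i A := by
  have hI : (Ideal.span {f}).IsHomogeneous (homogeneousSubmodule σ R) :=
    Ideal.homogeneous_span _ _ (by simpa using ⟨d, hf⟩)
  have hmem := homogeneousComponent_mem_of_mem hI (Ideal.mem_span_singleton.mpr hPA) i
  rw [map_sub, homogeneousComponent_of_mem ((mem_homogeneousSubmodule _ _).mpr hP),
    if_pos rfl, Ideal.mem_span_singleton] at hmem
  obtain ⟨Q, hQ⟩ := hmem
  exact ⟨Q, by rw [← hQ, sub_add_cancel]⟩

lemma Complex.card_nthRoots_toFinset {n : ℕ} (hn : 0 < n) {a : ℂ} (ha : a ≠ 0) :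
    (Polynomial.nthRoots n a).toFinset.card = n := by
  have hζ := Complex.isPrimitiveRoot_exp n hn.ne'
  rw [Multiset.toFinset_card_of_nodup (hζ.nthRoots_nodup ha), hζ.card_nthRoots,
    if_pos (IsAlgClosed.exists_pow_nat_eq a hn)]

-- Over each point of `{h ≠ 0}` the hypersurface `{x₀ ^ d + h = 0}` has `d` distinct points.
lemma MvPolynomial.eq_zero_of_degreeOf_lt_of_eval_eq_zero {n d : ℕ} (hd : 0 < d)
    {f : MvPolynomial (Fin (n + 1)) ℂ} {h : MvPolynomial (Fin n) ℂ}
    (hf : finSuccEquiv ℂ n f = Polynomial.X ^ d + Polynomial.C h) (hh : h ≠ 0)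
    {A : MvPolynomial (Fin (n + 1)) ℂ} (hA : A.degreeOf 0 < d)
    (hvan : ∀ v, eval v f = 0 → eval v A = 0) : A = 0 := by
  suffices hcoeff : ∀ j, (finSuccEquiv ℂ n A).coeff j = 0 by
    exact (finSuccEquiv ℂ n).injective (by ext j : 1; simp [hcoeff])
  intro j
  suffices h * (finSuccEquiv ℂ n A).coeff j = 0 from (mul_eq_zero.mp this).resolve_left hh
  refine MvPolynomial.funext fun x => ?_
  rw [map_zero, eval_mul, mul_eq_zero, or_iff_not_imp_left]
  intro hx
  set roots := (Polynomial.nthRoots d (-eval x h)).toFinset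
  have hroot : ∀ y ∈ roots, ((finSuccEquiv ℂ n A).map (eval x)).eval y = 0 := by
    intro y hy
    rw [Multiset.mem_toFinset, Polynomial.mem_nthRoots hd] at hy
    rw [← eval_eq_eval_mv_eval']
    apply hvan
    rw [eval_eq_eval_mv_eval', hf]
    simp [hy]
  have hzero := Polynomial.eq_zero_of_natDegree_lt_card_of_eval_eq_zero' _ roots hroot <| by
    rw [Complex.card_nthRoots_toFinset hd (neg_ne_zero.mpr hx)]
    exact (Polynomial.natDegree_map_le).trans_lt (by rwa [natDegree_finSuccEquiv])
  simpa using congrArg (Polynomial.coeff · j) hzero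

end Polynomials

section MonomialBasis

variable {σ : Type*} {F : ℕ → Set ((σ → ℂ) → ℂ)}

lemma dimQuotEq_of_monomials {i : ℕ} (S : Finset (σ →₀ ℕ))
    (hsub : ∀ g ∈ F (i + 1), ∀ h ∈ F (i + 1), g - h ∈ F (i + 1))
    (hmem : ∀ e ∈ S, (fun w => eval w (monomial e 1)) ∈ F i)
    (hex : ∀ g ∈ F i, ∃ A : MvPolynomial σ ℂ, A.support ⊆ S ∧ g - (fun w => eval w A) ∈ F (i + 1))
    (huniq : ∀ A : MvPolynomial σ ℂ, A.support ⊆ S → (fun w => eval w A) ∈ F (i + 1) → A = 0) :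
    dimQuotEq F i S.card := by
  set e : Fin S.card → σ →₀ ℕ := fun k => S.equivFin.symm k
  have he : Function.Injective e := Subtype.val_injective.comp S.equivFin.symm.injective
  set P : (Fin S.card → ℂ) → MvPolynomial σ ℂ := fun c => ∑ k, monomial (e k) (c k)
  set b : Fin S.card → (σ → ℂ) → ℂ := fun k w => eval w (monomial (e k) 1)
  have hsum (c : Fin S.card → ℂ) : ∑ k, c k • b k = fun w => eval w (P c) := by
    ext w; simp [P, b, eval_monomial]
  have hcoeff (c : Fin S.card → ℂ) (k : Fin S.card) : coeff (e k) (P c) = c k := by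
    simp [P, coeff_sum, coeff_monomial, he.eq_iff]
  have hsupp (c : Fin S.card → ℂ) : (P c).support ⊆ S := by
    refine (support_sum ..).trans (Finset.biUnion_subset.mpr fun k _ => ?_)
    exact (support_monomial_subset ..).trans (by simp [e])
  refine ⟨b, fun k => hmem _ (by simp [e]), fun g hg => ?_⟩
  obtain ⟨A, hAS, hgA⟩ := hex g hg
  have hPA : P (fun k => coeff (e k) A) = A := by
    conv_rhs => rw [← support_sum_monomial_coeff A,
      Finset.sum_subset hAS fun s _ hs => by rw [notMem_support_iff.mp hs, monomial_zero],
      ← Finset.sum_coe_sort S]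
    exact Fintype.sum_equiv S.equivFin.symm _ _ fun _ => rfl
  refine ⟨fun k => coeff (e k) A, by beta_reduce; rwa [hsum, hPA], fun c hc => funext fun k => ?_⟩
  beta_reduce at hc
  have hdiff := hsub _ hc _ (show g - ∑ k, coeff (e k) A • b k ∈ F (i + 1) by rwa [hsum, hPA])
  rw [sub_sub_sub_cancel_left, hsum, hsum, hPA] at hdiff
  have hzero := huniq (A - P c) ((support_sub ..).trans (Finset.union_subset hAS (hsupp c)))
    (by convert hdiff using 1; ext w; simp)
  have hk := congrArg (coeff (e k)) hzero
  rw [coeff_sub, hcoeff, coeff_zero, sub_eq_zero] at hk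
  exact hk.symm

end MonomialBasis

section TaylorForms

variable {N : ℕ}

noncomputable def FormalMultilinearSeries.taylorForm (p : FormalMultilinearSeries ℂ (Fin N → ℂ) ℂ)
    (k : ℕ) : MvPolynomial (Fin N) ℂ :=
  ∑ d : Fin k → Fin N, C (p k fun j => Pi.single (d j) 1) * ∏ j, X (d j)

namespace FormalMultilinearSeries

variable (p : FormalMultilinearSeries ℂ (Fin N → ℂ) ℂ) (k : ℕ)

lemma eval_taylorForm (v : Fin N → ℂ) : eval v (p.taylorForm k) = p k fun _ => v := by
  have hv : v = ∑ l, v l • (Pi.single l 1 : Fin N → ℂ) := by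
    ext m; simp [Pi.single_apply]
  conv_rhs => rw [hv, (p k).map_sum]
  simp_rw [(p k).map_smul_univ]
  simp [taylorForm, smul_eq_mul, mul_comm]

lemma isHomogeneous_taylorForm : (p.taylorForm k).IsHomogeneous k := by
  refine IsHomogeneous.sum _ _ _ fun d _ => ?_
  simpa using (isHomogeneous_C _ _).mul
    (IsHomogeneous.prod Finset.univ _ (fun _ => 1) fun j _ => isHomogeneous_X ℂ (d j))

lemma partialSum_eq_sum_eval_taylorForm (n : ℕ) (v : Fin N → ℂ) :
    p.partialSum n v = ∑ k ∈ Finset.range n, eval v (p.taylorForm k) := by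
  simp [partialSum, eval_taylorForm]

end FormalMultilinearSeries

end TaylorForms

section Cones

variable {N d i : ℕ} {φ : MvPolynomial (Fin N) ℂ}

lemma eval_taylorForm_eq_zero_of_mem_arcFiltration (hφ : φ.IsHomogeneous d)
    {g : (Fin N → ℂ) → ℂ} {p : FormalMultilinearSeries ℂ (Fin N → ℂ) ℂ}
    (hp : HasFPowerSeriesAt g p 0) (hg : g ∈ arcFiltration N (fun w => eval w φ) i) {j : ℕ}
    (hj : j < i) {v : Fin N → ℂ} (hv : eval v φ = 0) : eval v (p.taylorForm j) = 0 := by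
  rw [p.eval_taylorForm]
  exact hp.apply_eq_zero_of_mem_arcFiltration hg (hφ.eval_smul_eq_zero hv) hj

lemma sub_eval_mem_arcFiltration_succ (hφ : φ.IsHomogeneous d) {g : (Fin N → ℂ) → ℂ}
    {p : FormalMultilinearSeries ℂ (Fin N → ℂ) ℂ} (hp : HasFPowerSeriesAt g p 0)
    (hg : g ∈ arcFiltration N (fun w => eval w φ) i) {A : MvPolynomial (Fin N) ℂ}
    (hA : φ ∣ p.taylorForm i - A) :
    g - (fun w => eval w A) ∈ arcFiltration N (fun w => eval w φ) (i + 1) := by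
  refine mem_arcFiltration_of_eqOn_isBigO (hp.analyticAt.sub (A.analyticAt_eval 0))
    (hp.isBigO_sub_partialSum_pow (i + 1)) fun w hw => ?_
  obtain ⟨Q, hQ⟩ := hA
  have hAw : eval w (p.taylorForm i) = eval w A := by
    rw [← sub_eq_zero, ← map_sub, hQ, eval_mul, hw, zero_mul]
  have hlow : ∀ j ∈ Finset.range i, eval w (p.taylorForm j) = 0 := fun j hj =>
    eval_taylorForm_eq_zero_of_mem_arcFiltration hφ hp hg (Finset.mem_range.mp hj) hw
  rw [Pi.sub_apply, p.partialSum_eq_sum_eval_taylorForm, Finset.sum_range_succ,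
    Finset.sum_eq_zero hlow, hAw]
  simp

lemma eval_eq_zero_of_mem_arcFiltration_succ (hφ : φ.IsHomogeneous d)
    {A : MvPolynomial (Fin N) ℂ} (hA : A.IsHomogeneous i)
    (hmem : (fun w => eval w A) ∈ arcFiltration N (fun w => eval w φ) (i + 1)) {v : Fin N → ℂ}
    (hv : eval v φ = 0) : eval v A = 0 :=
  apply_eq_zero_of_homogeneous_mem_arcFiltration hA.eval_smul hmem (hφ.eval_smul_eq_zero hv)

end Cones

section WeierstrassCone

variable {n d : ℕ}

/-- Exponents of the degree-`i` monomials that are reduced modulo a polynomial monic of degree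
`d` in `x₀`. -/
def remainderExponents (n d i : ℕ) : Finset (Fin (n + 1) →₀ ℕ) :=
  {e ∈ Finset.finsuppAntidiag Finset.univ i | e 0 < d}

lemma mem_remainderExponents {i : ℕ} {e : Fin (n + 1) →₀ ℕ} :
    e ∈ remainderExponents n d i ↔ e.degree = i ∧ e 0 < d := by
  simp [remainderExponents, Finsupp.degree_eq_sum]

lemma MvPolynomial.exists_homogeneous_remainder {φ : MvPolynomial (Fin (n + 1)) ℂ}
    (hφ : φ.IsHomogeneous (d + 1)) (hmonic : (finSuccEquiv ℂ n φ).Monic)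
    (hdeg : (finSuccEquiv ℂ n φ).natDegree = d + 1) {i : ℕ} {P : MvPolynomial (Fin (n + 1)) ℂ}
    (hP : P.IsHomogeneous i) :
    ∃ A : MvPolynomial (Fin (n + 1)) ℂ,
      φ ∣ P - A ∧ A.support ⊆ remainderExponents n (d + 1) i := by
  obtain ⟨Q, A, hPA, hA⟩ := exists_eq_mul_add_degreeOf_le hmonic hdeg P
  obtain ⟨Q', hQ'⟩ :=
    exists_eq_mul_add_homogeneousComponent (A := A) hφ hP ⟨Q, by rw [hPA]; ring⟩
  refine ⟨homogeneousComponent i A, ⟨Q', by rw [hQ']; ring⟩, fun e he => ?_⟩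
  have heA : e ∈ A.support := (Finset.mem_filter.mp (support_homogeneousComponent i A ▸ he)).1
  have hdeg_e := (homogeneousComponent_isHomogeneous i A).degree_eq_sum_deg_support he
  exact mem_remainderExponents.mpr
    ⟨hdeg_e.symm, Nat.lt_succ_of_le ((monomial_le_degreeOf 0 heA).trans hA)⟩

theorem dimQuotEq_arcFiltration_of_finSuccEquiv_eq {φ : MvPolynomial (Fin (n + 1)) ℂ}
    {h : MvPolynomial (Fin n) ℂ} (hφ : φ.IsHomogeneous (d + 1))
    (hφh : finSuccEquiv ℂ n φ = Polynomial.X ^ (d + 1) + Polynomial.C h) (hh : h ≠ 0) (i : ℕ) :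
    dimQuotEq (arcFiltration (n + 1) fun w => eval w φ) i
      (remainderExponents n (d + 1) i).card := by
  have hmonic : (finSuccEquiv ℂ n φ).Monic := hφh ▸ Polynomial.monic_X_pow_add_C _ d.succ_ne_zero
  have hdeg : (finSuccEquiv ℂ n φ).natDegree = d + 1 := by
    rw [hφh, Polynomial.natDegree_X_pow_add_C]
  refine dimQuotEq_of_monomials _ (fun _ hg _ hh => sub_mem_arcFiltration hg hh)
    (fun e he => ?mem) (fun g hg => ?existence) (fun A hA hmem => ?uniqueness)
  case mem =>
    refine mem_arcFiltration_of_eqOn_isBigO ((monomial e 1).analyticAt_eval 0) ?_ fun _ _ => rfl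
    simpa [(mem_remainderExponents.mp he).1] using isBigO_eval_monomial e
  case existence =>
    obtain ⟨p, hp⟩ := hg.1
    obtain ⟨A, hφA, hAS⟩ :=
      exists_homogeneous_remainder hφ hmonic hdeg (p.isHomogeneous_taylorForm i)
    exact ⟨A, hAS, sub_eval_mem_arcFiltration_succ hφ hp hg hφA⟩
  case uniqueness =>
    have hAi : A.IsHomogeneous i := fun e he => by
      rw [← (mem_remainderExponents.mp (hA (mem_support_iff.mpr he))).1,
        Finsupp.degree_eq_weight_one]
      rfl
    refine eq_zero_of_degreeOf_lt_of_eval_eq_zero d.succ_pos hφh hh ?_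
      fun v hv => eval_eq_zero_of_mem_arcFiltration_succ hφ hAi hmem hv
    exact Nat.lt_succ_of_le <| degreeOf_le_iff.mpr fun e he =>
      Nat.lt_succ_iff.mp (mem_remainderExponents.mp (hA he)).2

end WeierstrassCone

noncomputable def fermatCubic : MvPolynomial (Fin 3) ℂ := X 0 ^ 3 + X 1 ^ 3 + X 2 ^ 3

lemma isHomogeneous_fermatCubic : fermatCubic.IsHomogeneous 3 :=
  ((isHomogeneous_X_pow 0 3).add (isHomogeneous_X_pow 1 3)).add (isHomogeneous_X_pow 2 3)

lemma finSuccEquiv_fermatCubic :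
    finSuccEquiv ℂ 2 fermatCubic = Polynomial.X ^ 3 + Polynomial.C (X 0 ^ 3 + X 1 ^ 3) := by
  simp only [fermatCubic, map_add, map_pow, finSuccEquiv_X_zero,
    show (2 : Fin 3) = Fin.succ 1 from rfl, show (1 : Fin 3) = Fin.succ 0 from rfl,
    finSuccEquiv_X_succ]
  ring

lemma X_pow_three_add_X_pow_three_ne_zero :
    (X 0 ^ 3 + X 1 ^ 3 : MvPolynomial (Fin 2) ℂ) ≠ 0 := fun h => by
  simpa using congrArg (eval ![1, 0]) h

lemma card_remainderExponents_two_three (i : ℕ) :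
    (remainderExponents 2 3 i).card = if i = 0 then 1 else 3 * i := by
  have hmem {e : Fin 3 →₀ ℕ} : e ∈ remainderExponents 2 3 i ↔ e 0 + e 1 + e 2 = i ∧ e 0 < 3 := by
    rw [mem_remainderExponents, Finsupp.degree_eq_sum, Fin.sum_univ_three]
  have hcard : (remainderExponents 2 3 i).card = ∑ a ∈ Finset.range 3, (i + 1 - a) := by
    rw [show ∑ a ∈ Finset.range 3, (i + 1 - a) =
      ((Finset.range 3).sigma fun a => Finset.range (i + 1 - a)).card by simp [Finset.card_sigma]]
    refine Finset.card_nbij' (fun e => ⟨e 0, e 1⟩)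
      (fun p => Finsupp.equivFunOnFinite.symm ![p.1, p.2, i - p.1 - p.2]) ?_ ?_ ?_ ?_
    · intro e he
      have := hmem.mp he
      simp only [Finset.mem_coe, Finset.mem_sigma, Finset.mem_range]
      omega
    · rintro ⟨a, b⟩ hab
      simp only [Finset.mem_coe, Finset.mem_sigma, Finset.mem_range] at hab
      rw [Finset.mem_coe, hmem]
      simp only [Finsupp.equivFunOnFinite_symm_apply_apply, Matrix.cons_val_zero,
        Matrix.cons_val_one, Matrix.cons_val]
      omega
    · intro e he
      have := hmem.mp he
      ext l
      fin_cases l <;> simp [← this.1, add_assoc]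
    · rintro ⟨a, b⟩ _
      simp
  rw [hcard]
  simp only [Finset.sum_range_succ, Finset.sum_range_zero]
  split_ifs <;> omega

lemma PowerSeries.mk_mul_one_sub_X_pow_three :
    (PowerSeries.mk fun i => ((if i = 0 then 1 else 3 * i : ℕ) : ℤ)) * (1 - PowerSeries.X) ^ 3
      = 1 - PowerSeries.X ^ 3 := by
  ext n
  rw [show (1 - PowerSeries.X : PowerSeries ℤ) ^ 3 = 1 - PowerSeries.C 3 * PowerSeries.X ^ 1
      + PowerSeries.C 3 * PowerSeries.X ^ 2 - PowerSeries.X ^ 3 by simp only [map_ofNat]; ring]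
  simp only [mul_sub, mul_add, mul_one, mul_left_comm _ (PowerSeries.C _),
    map_sub, map_add, PowerSeries.coeff_C_mul, PowerSeries.coeff_mul_X_pow', PowerSeries.coeff_mk,
    PowerSeries.coeff_one, PowerSeries.coeff_X_pow]
  rcases n with _ | _ | _ | _ | n <;> simp
  ring

/-- For the parabolic surface singularity `T_{3,3,3}` (= `P₈`),
i.e. `(V,0) ⊆ (ℂ³,0)` defined by `x³ + y³ + z³ = 0`, the Poincaré series of the arc
filtration is `P_{V,0}(t) = (1 - t³)/(1 - t)³`; equivalently
`dim_ℂ (F₀/F₁) = 1` and `dim_ℂ (F_i/F_{i+1}) = 3i` for `i ≥ 1`. -/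
theorem poincare_series_T333 :
    ∃ dimF : ℕ → ℕ,
      (∀ i, dimQuotEq
        (arcFiltration 3 (fun w : Fin 3 → ℂ => w 0 ^ 3 + w 1 ^ 3 + w 2 ^ 3)) i
        (dimF i)) ∧
      (PowerSeries.mk fun i => (dimF i : ℤ)) * (1 - PowerSeries.X) ^ 3
        = 1 - PowerSeries.X ^ 3 ∧
      dimF 0 = 1 ∧ ∀ i, 1 ≤ i → dimF i = 3 * i := by
  refine ⟨fun i => if i = 0 then 1 else 3 * i, fun i => ?_,
    PowerSeries.mk_mul_one_sub_X_pow_three, rfl, fun i hi => if_neg (by omega)⟩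
  have hV : (fun w : Fin 3 → ℂ => w 0 ^ 3 + w 1 ^ 3 + w 2 ^ 3) = fun w => eval w fermatCubic := by
    ext w; simp [fermatCubic]
  beta_reduce
  rw [hV, ← card_remainderExponents_two_three]
  exact dimQuotEq_arcFiltration_of_finSuccEquiv_eq isHomogeneous_fermatCubic
    finSuccEquiv_fermatCubic X_pow_three_add_X_pow_three_ne_zero i
end
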